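/- Let T : [0,1] → [0,1] be a transitive piecewise monotonic map with positive topological entropy, with Markov diagram (D,→), and let C ⊂ D and a finite subset F of C satisfy: (i) for any pair of vertices in C there is a path in (D,→) leading from one to the other; (ii) C ∈ C and C → D imply D ∈ C; (iii) Ψ({(C_n)_{n≥1} ∈ Σ_C : C_1 ∈ F}) = Ψ(Σ_C) = Σ_T. Let N ≥ 0 be an integer with F ⊂ D_N. Then L(Σ_T) = C^{p,N} G^N C^{s,N}, i.e., every word in L(Σ_T) is a concatenation uvw with u ∈ C^{p,N}, v ∈ G^N, w ∈ C^{s,N}, where C^{p,N} = {∅}, G^N = {∅} ∪ {(C_1⋯C_n) : C_1 → ⋯ → C_n is a path with C_1, C_n ∈ D_N ∩ C}, and C^{s,N} = {∅} ∪ {(C_1⋯C_n) : C_1 → ⋯ → C_n is a path with C_1 ∈ D_{N+1} and C_i ∈ C ∖ D_N for i = 1,…,n}. -/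
import Mathlib


open Filter Set
open scoped ENNReal

namespace Paper

/-- The one-sided full shift on `m` symbols. -/
abbrev FullShift (m : ℕ) := ℕ → Fin m

/-- The left shift. -/
def shift {m : ℕ} (x : FullShift m) : FullShift m := fun n => x (n + 1)

/-- The word `w` occurs in `x` (starting at some position). -/
def Occurs {m : ℕ} (w : List (Fin m)) (x : FullShift m) : Prop :=
  ∃ k : ℕ, ∀ i : Fin w.length, x (k + i) = w.get i

/-- The language of a subshift. -/
def language {m : ℕ} (S : Set (FullShift m)) : Set (List (Fin m)) :=
  {w | w = [] ∨ ∃ x ∈ S, Occurs w x}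

/-- `h(E)`: the exponential growth rate `limsup (log #(E ∩ L_n(S)))/n`. -/
noncomputable def hofE {m : ℕ} (S : Set (FullShift m)) (E : Set (List (Fin m))) : ℝ :=
  Filter.atTop.limsup
    (fun n : ℕ => Real.log ({w | w ∈ E ∧ w ∈ language S ∧ w.length = n}.ncard) / n)

/-- Language decomposition `L(S) = Cp · G · Cs`. -/
def LangDecomp {m : ℕ} (S : Set (FullShift m)) (Cp G Cs : Set (List (Fin m))) : Prop :=
  Cp ⊆ language S ∧ G ⊆ language S ∧ Cs ⊆ language S ∧
    ∀ w ∈ language S, ∃ u ∈ Cp, ∃ v ∈ G, ∃ s ∈ Cs, w = u ++ v ++ s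

/-- The concatenation `v s ++ w s ++ v (s+1) ++ w (s+1) ++ ⋯ ++ w (s+n-1) ++ v (s+n)`. -/
def chain {m : ℕ} (v w : ℕ → List (Fin m)) (s n : ℕ) : List (Fin m) :=
  v s ++ ((List.range n).map fun i => w (s + i) ++ v (s + i + 1)).flatten

/-- (W')-specification with gap size `t`. -/
def HasWPrimeSpec {m : ℕ} (S : Set (FullShift m)) (G : Set (List (Fin m))) (t : ℕ) : Prop :=
  [] ∈ G ∧
  ∀ j k : ℕ, 2 ≤ j → 2 ≤ k → ∀ v w : ℕ → List (Fin m),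
    (∀ i, i < j + k → v i ∈ G) →
    (∀ i, i < j + k - 1 → w i ∈ language S ∧ (w i).length ≤ t) →
    chain v w 0 (j - 1) ∈ language S →
    chain v w j (k - 1) ∈ language S →
    ∃ u ∈ language S, u.length ≤ t ∧
      chain v w 0 (j - 1) ++ u ++ chain v w j (k - 1) ∈ language S

/-- `T : [0,1] → [0,1]` is piecewise monotonic with pieces `I 0, …, I (m-1)`. -/
def PiecewiseMonotonic (T : ℝ → ℝ) {m : ℕ} (I : Fin m → Set ℝ) : Prop :=
  Set.MapsTo T (Set.Icc 0 1) (Set.Icc 0 1) ∧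
  (∀ j, I j ⊆ Set.Icc 0 1) ∧
  (∀ j, (I j).OrdConnected) ∧
  (∀ j, ∃ a ∈ I j, ∃ b ∈ I j, a ≠ b) ∧
  Pairwise (Function.onFun Disjoint I) ∧
  (⋃ j, I j) = Set.Icc 0 1 ∧
  ∀ j, ContinuousOn T (interior (I j)) ∧
    (StrictMonoOn T (interior (I j)) ∨ StrictAntiOn T (interior (I j)))

/-- `T` is transitive on `[0,1]`. -/
def TransitiveOn01 (T : ℝ → ℝ) : Prop :=
  ∃ x ∈ Set.Icc (0 : ℝ) 1, Set.Icc (0 : ℝ) 1 ⊆ closure {y | ∃ n : ℕ, T^[n] x = y}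

/-- `X_T = ⋂_{n≥0} T^{-n}(⋃_j int(I_j))`, the domain of the coding map. -/
def codingDomain (T : ℝ → ℝ) {m : ℕ} (I : Fin m → Set ℝ) : Set ℝ :=
  {x | ∀ n : ℕ, T^[n] x ∈ ⋃ j, interior (I j)}

/-- The coding space `Σ_T`: the closure of the set of itineraries of points of `X_T`. -/
def codingSpace (T : ℝ → ℝ) {m : ℕ} (I : Fin m → Set ℝ) : Set (FullShift m) :=
  closure {s : FullShift m | ∃ x ∈ codingDomain T I, ∀ n : ℕ, T^[n] x ∈ interior (I (s n))}

/-- `D` is a successor of `C`: `D` is nonempty and `D = [j] ∩ σ(C)` for some symbol `j`. -/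
def IsSuccessor {m : ℕ} (C D : Set (FullShift m)) : Prop :=
  D.Nonempty ∧ ∃ j : Fin m, D = {x | x 0 = j} ∩ (shift '' C)

/-- The levels `D_n` of the Markov diagram of the subshift `S`. -/
def MarkovLevel {m : ℕ} (S : Set (FullShift m)) : ℕ → Set (Set (FullShift m))
  | 0 => {C | ∃ j : Fin m, C = {x ∈ S | x 0 = j}}
  | n + 1 => MarkovLevel S n ∪ {D | ∃ C ∈ MarkovLevel S n, IsSuccessor C D}

/-- The vertex set `D = ⋃_n D_n` of the Markov diagram. -/
def MarkovDiagram {m : ℕ} (S : Set (FullShift m)) : Set (Set (FullShift m)) :=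
  ⋃ n, MarkovLevel S n

/-- A path of `n` vertices (hence `n - 1` edges), all vertices belonging to `V`. -/
def IsPathOn {m : ℕ} (V : Set (Set (FullShift m))) (C : ℕ → Set (FullShift m)) (n : ℕ) :
    Prop :=
  (∀ i, i < n → C i ∈ V) ∧ ∀ i, i + 1 < n → IsSuccessor (C i) (C (i + 1))

/-- There is a path (with at least one edge) in the Markov diagram of `S` from `C` to `C'`. -/
def JoinedIn {m : ℕ} (S : Set (FullShift m)) (C C' : Set (FullShift m)) : Prop :=
  ∃ n : ℕ, 1 ≤ n ∧ ∃ P : ℕ → Set (FullShift m),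
    IsPathOn (MarkovDiagram S) P (n + 1) ∧ P 0 = C ∧ P n = C'

/-- There is a path in the Markov diagram of `S` from `C` to `C'` with at most `t` edges. -/
def JoinedInWithin {m : ℕ} (S : Set (FullShift m)) (C C' : Set (FullShift m)) (t : ℕ) :
    Prop :=
  ∃ n : ℕ, 1 ≤ n ∧ n ≤ t ∧ ∃ P : ℕ → Set (FullShift m),
    IsPathOn (MarkovDiagram S) P (n + 1) ∧ P 0 = C ∧ P n = C'

/-- The set `G^N`: the empty word together with all words read off finite paths in the
Markov diagram whose first and last vertices lie in `D_N ∩ 𝒞`. -/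
def GN {m : ℕ} (S : Set (FullShift m)) (𝒞 : Set (Set (FullShift m))) (N : ℕ) :
    Set (List (Fin m)) :=
  {w | w = [] ∨ ∃ C : ℕ → Set (FullShift m),
    1 ≤ w.length ∧
    IsPathOn (MarkovDiagram S) C w.length ∧
    C 0 ∈ MarkovLevel S N ∩ 𝒞 ∧ C (w.length - 1) ∈ MarkovLevel S N ∩ 𝒞 ∧
    ∀ i : Fin w.length, C i ⊆ {x | x 0 = w.get i}}

/-- The set `C^{s,N}`: the empty word together with all words read off finite paths whose
first vertex lies in `D_{N+1}` and all of whose vertices lie in `𝒞 ∖ D_N`. -/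
def CsN {m : ℕ} (S : Set (FullShift m)) (𝒞 : Set (Set (FullShift m))) (N : ℕ) :
    Set (List (Fin m)) :=
  {w | w = [] ∨ ∃ C : ℕ → Set (FullShift m),
    1 ≤ w.length ∧
    IsPathOn (MarkovDiagram S) C w.length ∧
    C 0 ∈ MarkovLevel S (N + 1) ∧
    (∀ i, i < w.length → C i ∈ 𝒞 \ MarkovLevel S N) ∧
    ∀ i : Fin w.length, C i ⊆ {x | x 0 = w.get i}}

/-- `Ψ({(C_n) ∈ Σ_𝒞 : C_1 ∈ F})`: the set of symbol sequences read off infinite paths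
with all vertices in `𝒞` and first vertex in `F` (the point `Ψ((C_n))` is the unique
element of `⋂_n [(C_1 ⋯ C_n)]`). -/
def PsiImage {m : ℕ} (𝒞 F : Set (Set (FullShift m))) : Set (FullShift m) :=
  {x | ∃ C : ℕ → Set (FullShift m),
    (∀ n, C n ∈ 𝒞) ∧ (∀ n, IsSuccessor (C n) (C (n + 1))) ∧ C 0 ∈ F ∧
    ∀ n, C n ⊆ {y | y 0 = x n}}

lemma shift_iterate_apply {m : ℕ} (x : FullShift m) (k n : ℕ) :
    (shift^[k] x) n = x (n + k) := by
  induction k generalizing x n with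
  | zero => rfl
  | succ k ih =>
    rw [Function.iterate_succ_apply, ih]
    rfl

lemma shift_continuous {m : ℕ} : Continuous (shift (m := m)) :=
  continuous_pi fun n => continuous_apply (n + 1)

lemma shift_mem_codingSpace (T : ℝ → ℝ) {m : ℕ} (I : Fin m → Set ℝ)
    {x : FullShift m} (hx : x ∈ codingSpace T I) : shift x ∈ codingSpace T I := by
  have h1 : shift x ∈ closure (shift ''
      {s : FullShift m | ∃ p ∈ codingDomain T I, ∀ n : ℕ, T^[n] p ∈ interior (I (s n))}) :=
    image_closure_subset_closure_image shift_continuous (Set.mem_image_of_mem _ hx)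
  refine closure_mono ?_ h1
  rintro _ ⟨s, ⟨p, hp, hps⟩, rfl⟩
  refine ⟨T p, fun n => ?_, fun n => ?_⟩
  · rw [← Function.iterate_succ_apply]
    exact hp (n + 1)
  · show T^[n] (T p) ∈ interior (I (s (n + 1)))
    rw [← Function.iterate_succ_apply]
    exact hps (n + 1)

lemma shift_iterate_mem_codingSpace (T : ℝ → ℝ) {m : ℕ} (I : Fin m → Set ℝ)
    {x : FullShift m} (hx : x ∈ codingSpace T I) (k : ℕ) :
    shift^[k] x ∈ codingSpace T I := by
  induction k with
  | zero => exact hx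
  | succ k ih => rw [Function.iterate_succ_apply']; exact shift_mem_codingSpace T I ih

/-- **Lemma.** Under the conclusions of the Hofbauer–Raith lemma, if `F ⊆ D_N` then
`L(Σ_T) = C^{p,N} G^N C^{s,N}` with `C^{p,N} = {∅}`. -/
theorem language_decomposes_GN_CsN
    (m : ℕ) (T : ℝ → ℝ) (I : Fin m → Set ℝ)
    (hpm : PiecewiseMonotonic T I)
    (htrans : TransitiveOn01 T)
    (hent : 0 < hofE (codingSpace T I) (language (codingSpace T I)))
    (𝒞 : Set (Set (FullShift m)))
    (h𝒞 : 𝒞 ⊆ MarkovDiagram (codingSpace T I))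
    (F : Set (Set (FullShift m))) (hFfin : F.Finite) (hF𝒞 : F ⊆ 𝒞)
    (hconn : ∀ C ∈ 𝒞, ∀ C' ∈ 𝒞, JoinedIn (codingSpace T I) C C')
    (hsucc : ∀ C ∈ 𝒞, ∀ D, IsSuccessor C D → D ∈ 𝒞)
    (hPsiF : PsiImage 𝒞 F = PsiImage 𝒞 𝒞)
    (hPsi : PsiImage 𝒞 𝒞 = codingSpace T I)
    (N : ℕ) (hFN : F ⊆ MarkovLevel (codingSpace T I) N) :
    ∀ w ∈ language (codingSpace T I),
      ∃ u ∈ ({([] : List (Fin m))} : Set (List (Fin m))),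
        ∃ v ∈ GN (codingSpace T I) 𝒞 N,
          ∃ s ∈ CsN (codingSpace T I) 𝒞 N, w = u ++ v ++ s := by
  classical
  intro w hw
  by_cases hwE : w = []
  · subst hwE
    exact ⟨[], rfl, [], Or.inl rfl, [], Or.inl rfl, rfl⟩
  rcases hw with rfl | ⟨x, hxS, k, hocc⟩
  · exact absurd rfl hwE
  have hL : 1 ≤ w.length := List.length_pos_iff.mpr hwE
  set y : FullShift m := shift^[k] x with hy
  have hyS : y ∈ codingSpace T I := shift_iterate_mem_codingSpace T I hxS k
  have hyP : y ∈ PsiImage 𝒞 F := by rw [hPsiF, hPsi]; exact hyS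
  obtain ⟨C, hC𝒞, hCsucc, hCF, hCsub⟩ := hyP
  have hyw : ∀ i : ℕ, (hi : i < w.length) → y i = w.get ⟨i, hi⟩ := by
    intro i hi
    have h0 := hocc ⟨i, hi⟩
    simp only [hy, shift_iterate_apply]
    rw [Nat.add_comm]
    exact h0
  set P : ℕ → Prop := fun i => C i ∈ MarkovLevel (codingSpace T I) N with hPdef
  set t : ℕ := Nat.findGreatest P (w.length - 1) with htdef
  have hP0 : P 0 := hFN hCF
  have hPt : P t := Nat.findGreatest_spec (Nat.zero_le _) hP0
  have ht_le : t ≤ w.length - 1 := Nat.findGreatest_le _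
  have hmax : ∀ i, t < i → i ≤ w.length - 1 → ¬ P i := fun i h1 h2 =>
    Nat.findGreatest_is_greatest h1 h2
  have ht1 : t + 1 ≤ w.length := by omega
  refine ⟨[], rfl, w.take (t + 1), ?_, w.drop (t + 1), ?_, by simp⟩
  · -- the middle word is in GN
    have hvlen : (w.take (t + 1)).length = t + 1 := by
      simp [List.length_take, Nat.min_eq_left ht1]
    refine Or.inr ⟨C, by omega, ⟨fun i _ => h𝒞 (hC𝒞 i), fun i _ => hCsucc i⟩,
      ⟨hP0, hC𝒞 0⟩, ?_, ?_⟩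
    · rw [hvlen]
      exact ⟨hPt, hC𝒞 t⟩
    · intro i z hz
      have h1 := hCsub i hz
      have hi : (i : ℕ) < w.length := by
        have h2 := lt_of_lt_of_eq i.2 hvlen; omega
      simp only [Set.mem_setOf_eq] at h1 ⊢
      rw [h1, hyw i hi]
      simp [List.get_eq_getElem, List.getElem_take]
  · -- the last word is in CsN
    rcases eq_or_lt_of_le ht1 with heq | hlt
    · left
      exact List.drop_eq_nil_of_le (le_of_eq heq.symm)
    · have hslen : (w.drop (t + 1)).length = w.length - (t + 1) := by
        simp [List.length_drop]
      refine Or.inr ⟨fun i => C (t + 1 + i), by omega,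
        ⟨fun i _ => h𝒞 (hC𝒞 _), fun i _ => hCsucc _⟩, ?_, ?_, ?_⟩
      · show C (t + 1 + 0) ∈ MarkovLevel (codingSpace T I) (N + 1)
        have : C (t + 1) ∈ MarkovLevel (codingSpace T I) N ∪
            {D | ∃ C' ∈ MarkovLevel (codingSpace T I) N, IsSuccessor C' D} :=
          Set.mem_union_right _ ⟨C t, hPt, hCsucc t⟩
        simpa [MarkovLevel] using this
      · intro i hi
        rw [hslen] at hi
        exact ⟨hC𝒞 _, hmax (t + 1 + i) (by omega) (by omega)⟩
      · intro i z hz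
        have hi : t + 1 + (i : ℕ) < w.length := by
          have h2 := lt_of_lt_of_eq i.2 hslen; omega
        have h1 := hCsub (t + 1 + i) hz
        simp only [Set.mem_setOf_eq] at h1 ⊢
        rw [h1, hyw _ hi]
        simp [List.get_eq_getElem, List.getElem_drop]

end Paper
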